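/- Let Γ be a distance-regular graph with v vertices, valency k, diameter D ≥ 3, distinct eigenvalues k = θ_0 > θ_1 > ⋯ > θ_D with multiplicities 1, m_1, …, m_D. Set ζ = (v-1)/k, γ = θ_1/(a_1+1), δ = k/(a_1+1). If there exists N ≤ 4 with k/N ≤ min{m_1, m_D} and θ_D ≤ -2, then a_1 + 1 ≤ N(ζ-1)δ/γ². -/

import Mathlib

section AuxLemmas
open Matrix
open scoped Classical
set_option linter.unusedSectionVars false
set_option maxHeartbeats 1000000

variable {V : Type} [Fintype V] [DecidableEq V] {G : SimpleGraph V}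

private lemma DRGaux_adj_isHermitian (G : SimpleGraph V) : (G.adjMatrix ℝ).IsHermitian := by
  unfold Matrix.IsHermitian
  rw [conjTranspose_eq_transpose_of_trivial]
  exact G.isSymm_adjMatrix

private lemma DRGaux_symm_dot {A : Matrix V V ℝ} (hA : A.IsHermitian) (x y : V → ℝ) :
    ∑ z, (A *ᵥ x) z * y z = ∑ z, x z * (A *ᵥ y) z := by
  simp only [Matrix.mulVec, dotProduct, Finset.sum_mul, Finset.mul_sum]
  rw [Finset.sum_comm]
  refine Finset.sum_congr rfl fun z _ => Finset.sum_congr rfl fun w _ => ?_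
  have h : A z w = A w z := by
    conv_lhs => rw [← hA]
    rfl
  rw [h]; ring

private lemma DRGaux_inner_eq_dot (u w : EuclideanSpace ℝ V) :
    inner (𝕜 := ℝ) u w = ∑ x, u x * w x := by
  rw [PiLp.inner_apply]; simp [RCLike.inner_apply]
  exact Finset.sum_congr rfl fun _ _ => mul_comm _ _

private lemma DRGaux_eigen_coeff {A : Matrix V V ℝ} (hA : A.IsHermitian) {μ : ℝ} {v : V → ℝ}
    (hv : A *ᵥ v = μ • v) (j : V) (hj : hA.eigenvalues j ≠ μ) :
    ∑ z, hA.eigenvectorBasis j z * v z = 0 := by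
  have e1 : ∑ z, (A *ᵥ ⇑(hA.eigenvectorBasis j)) z * v z
      = ∑ z, hA.eigenvectorBasis j z * (μ • v) z := by
    rw [DRGaux_symm_dot hA, hv]
  rw [hA.mulVec_eigenvectorBasis] at e1
  simp only [Pi.smul_apply, smul_eq_mul] at e1
  have h1 : hA.eigenvalues j * ∑ z, hA.eigenvectorBasis j z * v z
      = μ * ∑ z, hA.eigenvectorBasis j z * v z := by
    calc hA.eigenvalues j * ∑ z, hA.eigenvectorBasis j z * v z
        = ∑ z, hA.eigenvalues j * hA.eigenvectorBasis j z * v z := by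
          rw [Finset.mul_sum]; exact Finset.sum_congr rfl fun z _ => by ring
      _ = ∑ z, hA.eigenvectorBasis j z * (μ * v z) := e1
      _ = μ * ∑ z, hA.eigenvectorBasis j z * v z := by
          rw [Finset.mul_sum]; exact Finset.sum_congr rfl fun z _ => by ring
  have h2 := sub_eq_zero.2 h1
  rw [← sub_mul] at h2
  rcases mul_eq_zero.1 h2 with h | h
  · exact absurd (sub_eq_zero.1 h) hj
  · exact h

private lemma DRGaux_expand_vec {A : Matrix V V ℝ} (hA : A.IsHermitian) (v : V → ℝ) (x : V) :
    v x = ∑ j, (∑ z, hA.eigenvectorBasis j z * v z) * hA.eigenvectorBasis j x := by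
  have h := hA.eigenvectorBasis.sum_repr' ((WithLp.equiv 2 (V → ℝ)).symm v)
  have h2 := congrArg (fun w : EuclideanSpace ℝ V => w x) h
  simp only [WithLp.equiv_symm_apply, WithLp.ofLp_toLp] at h2
  rw [← h2]
  have h3 : ∀ (f : V → EuclideanSpace ℝ V), (∑ j, f j : EuclideanSpace ℝ V) x = ∑ j, (f j) x :=
    fun f => by rw [WithLp.ofLp_sum]; exact Finset.sum_apply x Finset.univ fun j => f j
  rw [h3]
  refine Finset.sum_congr rfl fun j _ => ?_
  rw [PiLp.smul_apply, DRGaux_inner_eq_dot]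
  simp only [WithLp.equiv_symm_apply, WithLp.ofLp_toLp, smul_eq_mul]

private lemma DRGaux_exists_eig_index {A : Matrix V V ℝ} (hA : A.IsHermitian) {μ : ℝ} {v : V → ℝ}
    (hv0 : v ≠ 0) (hv : A *ᵥ v = μ • v) : ∃ j, hA.eigenvalues j = μ := by
  by_contra hno
  push_neg at hno
  apply hv0
  funext x
  rw [show (0 : V → ℝ) x = 0 from rfl, DRGaux_expand_vec hA v x]
  refine Finset.sum_eq_zero fun j _ => ?_
  rw [DRGaux_eigen_coeff hA hv j (hno j), zero_mul]

private lemma DRGaux_finrank_eigenspace_le {A : Matrix V V ℝ} (hA : A.IsHermitian) (μ : ℝ) :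
    Module.finrank ℝ (Module.End.eigenspace (Matrix.toLin' A) μ)
      ≤ Fintype.card {j // hA.eigenvalues j = μ} := by
  set E := Module.End.eigenspace (Matrix.toLin' A) μ
  let f : (V → ℝ) →ₗ[ℝ] ({j // hA.eigenvalues j = μ} → ℝ) :=
    { toFun := fun v s => ∑ z, hA.eigenvectorBasis s.1 z * v z
      map_add' := by
        intro u w; funext s
        simp [mul_add, Finset.sum_add_distrib]
      map_smul' := by
        intro c w; funext s
        simp [Finset.mul_sum]
        refine Finset.sum_congr rfl fun z _ => by ring }
  have hinj : Function.Injective (f.comp E.subtype) := by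
    rw [← LinearMap.ker_eq_bot, LinearMap.ker_eq_bot']
    intro ⟨v, hvE⟩ hfv
    have hv : A *ᵥ v = μ • v := by
      have := (Module.End.mem_eigenspace_iff).1 hvE
      rwa [Matrix.toLin'_apply] at this
    ext1
    funext x
    show v x = 0
    rw [DRGaux_expand_vec hA v x]
    refine Finset.sum_eq_zero fun j _ => ?_
    by_cases hj : hA.eigenvalues j = μ
    · have h0 : (∑ z, hA.eigenvectorBasis j z * v z) = 0 := congrFun hfv ⟨j, hj⟩
      rw [h0, zero_mul]
    · rw [DRGaux_eigen_coeff hA hv j hj, zero_mul]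
  calc Module.finrank ℝ E ≤ Module.finrank ℝ ({j // hA.eigenvalues j = μ} → ℝ) :=
        LinearMap.finrank_le_finrank_of_injective hinj
    _ = Fintype.card {j // hA.eigenvalues j = μ} := by
        rw [Module.finrank_fintype_fun_eq_card]

private lemma DRGaux_sum_sq_eig {A : Matrix V V ℝ} (hA : A.IsHermitian) :
    ∑ j, hA.eigenvalues j ^ 2 = (A * A).trace := by
  set U : Matrix V V ℝ := (hA.eigenvectorUnitary : Matrix V V ℝ)
  set D : Matrix V V ℝ := Matrix.diagonal (RCLike.ofReal ∘ hA.eigenvalues)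
  have hU : star U * U = 1 := Unitary.coe_star_mul_self hA.eigenvectorUnitary
  have h := hA.spectral_theorem
  calc ∑ j, hA.eigenvalues j ^ 2 = (D * D).trace := by
        rw [Matrix.diagonal_mul_diagonal, Matrix.trace_diagonal]
        refine Finset.sum_congr rfl fun j _ => by
          simp [Function.comp, pow_two]
    _ = (U * (D * D) * star U).trace := by
        rw [Matrix.trace_mul_cycle, ← Matrix.mul_assoc, hU, Matrix.one_mul]
    _ = (A * A).trace := by
        rw [h]
        congr 1
        calc U * (D * D) * star U = U * D * (star U * U) * D * star U := by
              rw [hU, Matrix.mul_one]; noncomm_ring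
          _ = U * D * star U * (U * D * star U) := by noncomm_ring

private lemma DRGaux_trace_sq (G : SimpleGraph V) :
    (G.adjMatrix ℝ * G.adjMatrix ℝ).trace = ∑ x : V, (G.degree x : ℝ) := by
  rw [Matrix.trace]
  refine Finset.sum_congr rfl fun x _ => ?_
  rw [Matrix.diag_apply, SimpleGraph.adjMatrix_mul_self_apply_self]

private lemma DRGaux_eig_le_valency {k : ℕ} (hreg : G.IsRegularOfDegree k) {μ : ℝ} {v : V → ℝ}
    (hv0 : v ≠ 0) (hv : G.adjMatrix ℝ *ᵥ v = μ • v) : |μ| ≤ k := by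
  obtain ⟨y, hy⟩ := Function.ne_iff.1 hv0
  obtain ⟨x, -, hx⟩ := Finset.exists_max_image Finset.univ (fun z => |v z|) ⟨y, Finset.mem_univ y⟩
  have hxpos : 0 < |v x| := lt_of_lt_of_le (abs_pos.2 hy) (hx y (Finset.mem_univ y))
  have h1 : (G.adjMatrix ℝ *ᵥ v) x = μ * v x := by rw [hv]; rfl
  rw [SimpleGraph.adjMatrix_mulVec_apply] at h1
  have h2 : |μ| * |v x| = |∑ y ∈ G.neighborFinset x, v y| := by
    rw [← abs_mul, ← h1]
  have h3 : |∑ y ∈ G.neighborFinset x, v y| ≤ ∑ y ∈ G.neighborFinset x, |v y| :=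
    Finset.abs_sum_le_sum_abs _ _
  have h4 : ∑ y ∈ G.neighborFinset x, |v y| ≤ ∑ _y ∈ G.neighborFinset x, |v x| :=
    Finset.sum_le_sum fun y _ => hx y (Finset.mem_univ y)
  have h5 : (∑ _y ∈ G.neighborFinset x, |v x|) = k * |v x| := by
    rw [Finset.sum_const, SimpleGraph.card_neighborFinset_eq_degree, hreg x, nsmul_eq_mul]
  have := h2 ▸ (le_trans h3 (h4.trans_eq h5))
  exact le_of_mul_le_mul_right (by linarith) hxpos

private lemma DRGaux_perron (hconn : G.Connected) {k : ℕ} (hreg : G.IsRegularOfDegree k)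
    {v : V → ℝ} (hv : G.adjMatrix ℝ *ᵥ v = (k : ℝ) • v) (x y : V) : v x = v y := by
  have : Nonempty V := ⟨x⟩
  obtain ⟨x0, -, hx0⟩ := Finset.exists_max_image Finset.univ v ⟨x, Finset.mem_univ x⟩
  set M := v x0 with hM
  have step : ∀ a, v a = M → ∀ b, G.Adj a b → v b = M := by
    intro a ha b hab
    by_contra hb
    have hblt : v b < M := lt_of_le_of_ne (hx0 b (Finset.mem_univ b)) hb
    have h1 : (G.adjMatrix ℝ *ᵥ v) a = (k : ℝ) * v a := by rw [hv]; rfl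
    rw [SimpleGraph.adjMatrix_mulVec_apply] at h1
    have hlt : ∑ z ∈ G.neighborFinset a, v z < ∑ _z ∈ G.neighborFinset a, M :=
      Finset.sum_lt_sum (fun z _ => hx0 z (Finset.mem_univ z))
        ⟨b, (G.mem_neighborFinset a b).2 hab, hblt⟩
    rw [Finset.sum_const, SimpleGraph.card_neighborFinset_eq_degree, hreg a, nsmul_eq_mul,
      h1, ha] at hlt
    exact lt_irrefl _ hlt
  have reach : ∀ {a b : V}, v a = M → G.Walk a b → v b = M := by
    intro a b ha p
    induction p with
    | nil => exact ha
    | cons h q ih => exact ih (step _ ha _ h)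
  have hall : ∀ b, v b = M := fun b => reach rfl ((hconn x0 b).some)
  rw [hall x, hall y]

private lemma DRGaux_kill_two {A : Matrix V V ℝ} (hA : A.IsHermitian) {μ1 μ2 : ℝ}
    (hall : ∀ j, hA.eigenvalues j = μ1 ∨ hA.eigenvalues j = μ2) :
    (A - μ1 • 1) * (A - μ2 • 1) = 0 := by
  set M := (A - μ1 • 1) * (A - μ2 • 1) with hMdef
  have hbasis : ∀ j, M *ᵥ ⇑(hA.eigenvectorBasis j) = 0 := by
    intro j
    have h2 : (A - μ2 • 1) *ᵥ ⇑(hA.eigenvectorBasis j)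
        = (hA.eigenvalues j - μ2) • ⇑(hA.eigenvectorBasis j) := by
      rw [Matrix.sub_mulVec, hA.mulVec_eigenvectorBasis, Matrix.smul_mulVec,
        Matrix.one_mulVec, sub_smul]
    have h1 : ∀ (c : ℝ) (u : V → ℝ), A *ᵥ u = hA.eigenvalues j • u →
        (A - μ1 • 1) *ᵥ (c • u) = (c * (hA.eigenvalues j - μ1)) • u := by
      intro c u hu
      rw [Matrix.mulVec_smul, Matrix.sub_mulVec, hu, Matrix.smul_mulVec,
        Matrix.one_mulVec, ← sub_smul, smul_smul, mul_comm c]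
    rw [hMdef, ← Matrix.mulVec_mulVec, h2, h1 _ _ (hA.mulVec_eigenvectorBasis j)]
    rcases hall j with h | h <;> rw [h] <;> simp
  have hv : ∀ w : V → ℝ, M *ᵥ w = 0 := by
    intro w
    have hw : w = ∑ j, (∑ z, hA.eigenvectorBasis j z * w z) • ⇑(hA.eigenvectorBasis j) := by
      funext x
      rw [Finset.sum_apply]
      simpa [smul_eq_mul] using DRGaux_expand_vec hA w x
    rw [hw]
    have h6 : M *ᵥ (∑ j, (∑ z, hA.eigenvectorBasis j z * w z) • ⇑(hA.eigenvectorBasis j))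
        = ∑ j, (∑ z, hA.eigenvectorBasis j z * w z) • (M *ᵥ ⇑(hA.eigenvectorBasis j)) := by
      rw [show ∀ u : V → ℝ, M *ᵥ u = M.mulVecLin u from fun _ => rfl, map_sum]
      refine Finset.sum_congr rfl fun j _ => ?_
      rw [_root_.map_smul]
      rfl
    rw [h6]
    refine Finset.sum_eq_zero fun j _ => ?_
    rw [hbasis j, smul_zero]
  ext x y
  have := congrFun (hv (Pi.single y 1)) x
  rw [Matrix.mulVec_single] at this
  simpa using this

private lemma DRGaux_walk_dist_le (hconn : G.Connected) {x y : V} (p : G.Walk x y) (i : ℕ) :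
    G.dist x (p.getVert i) ≤ i := by
  induction i with
  | zero => simp [p.getVert_zero]
  | succ n ih =>
    by_cases h : n < p.length
    · have hadj := p.adj_getVert_succ h
      calc G.dist x (p.getVert (n+1))
          ≤ G.dist x (p.getVert n) + G.dist (p.getVert n) (p.getVert (n+1)) :=
            hconn.dist_triangle
        _ ≤ n + 1 := by
            have : G.dist (p.getVert n) (p.getVert (n+1)) = 1 :=
              (SimpleGraph.dist_eq_one_iff_adj).2 hadj
            omega
    · have h1 : p.getVert (n+1) = y := p.getVert_of_length_le (by omega)
      have h2 : p.getVert n = y := p.getVert_of_length_le (by omega)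
      rw [h1, ← h2]
      omega

private lemma DRGaux_dist_getVert (hconn : G.Connected) {x y : V} (p : G.Walk x y)
    (hp : p.length = G.dist x y) {i : ℕ} (hi : i ≤ p.length) :
    G.dist x (p.getVert i) = i := by
  have hle := DRGaux_walk_dist_le hconn p i
  have h2 : G.dist (p.getVert i) y ≤ p.length - i := by
    have := DRGaux_walk_dist_le hconn p.reverse (p.length - i)
    rw [p.getVert_reverse] at this
    have heq : p.length - (p.length - i) = i := by omega
    rw [heq] at this
    rwa [SimpleGraph.dist_comm] at this
  have h3 : G.dist x y ≤ G.dist x (p.getVert i) + G.dist (p.getVert i) y :=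
    hconn.dist_triangle
  omega

private lemma DRGaux_quadform_contra (hconn : G.Connected) {k : ℕ}
    (hreg : G.IsRegularOfDegree k)
    (hA : (G.adjMatrix ℝ).IsHermitian) {x0 x2 x3 : V}
    (h02 : G.dist x0 x2 = 2) (h03 : G.dist x0 x3 = 3) (h23 : G.Adj x2 x3)
    (hall : ∀ j, hA.eigenvalues j = (k : ℝ) ∨ hA.eigenvalues j ≤ 0) : False := by
  have hx02 : x0 ≠ x2 := by
    intro h; rw [h, SimpleGraph.dist_self] at h02; omega
  set w : V → ℝ := fun z => (if z = x0 then (1:ℝ) else 0) - (if z = x2 then (1:ℝ) else 0) with hw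
  have hwsum : ∀ u : V → ℝ, ∑ z, u z * w z = u x0 - u x2 := by
    intro u
    rw [hw]
    simp only [mul_sub, mul_ite, mul_one, mul_zero, Finset.sum_sub_distrib]
    rw [Finset.sum_ite_eq' Finset.univ x0 u, Finset.sum_ite_eq' Finset.univ x2 u]
    simp
  set c : V → ℝ := fun j => ∑ z, hA.eigenvectorBasis j z * w z with hc
  have hnadj02 : ¬ G.Adj x0 x2 := by
    intro h
    have h1 := SimpleGraph.dist_eq_one_iff_adj.2 h
    rw [h02] at h1; omega
  have hAw : ∀ z, (G.adjMatrix ℝ *ᵥ w) z = G.adjMatrix ℝ z x0 - G.adjMatrix ℝ z x2 := by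
    intro z
    show dotProduct (G.adjMatrix ℝ z) w = _
    rw [dotProduct]
    exact hwsum (fun y => G.adjMatrix ℝ z y)
  have hcoefA : ∀ j, ∑ z, hA.eigenvectorBasis j z * (G.adjMatrix ℝ *ᵥ w) z
      = hA.eigenvalues j * c j := by
    intro j
    have hsym := DRGaux_symm_dot hA (⇑(hA.eigenvectorBasis j)) w
    rw [hA.mulVec_eigenvectorBasis] at hsym
    simp only [Pi.smul_apply, smul_eq_mul] at hsym
    rw [← hsym]
    have hcj : hA.eigenvalues j * c j
        = ∑ z, hA.eigenvalues j * (hA.eigenvectorBasis j z * w z) := by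
      rw [hc, Finset.mul_sum]
    rw [hcj]
    exact Finset.sum_congr rfl fun z _ => by ring
  have hqf : ∑ z, w z * (G.adjMatrix ℝ *ᵥ w) z = 0 := by
    have h1 : ∑ z, w z * (G.adjMatrix ℝ *ᵥ w) z = ∑ z, (G.adjMatrix ℝ *ᵥ w) z * w z :=
      Finset.sum_congr rfl fun z _ => mul_comm _ _
    rw [h1, hwsum (fun z => (G.adjMatrix ℝ *ᵥ w) z), hAw x0, hAw x2]
    have hnadj20 : ¬ G.Adj x2 x0 := fun h => hnadj02 (G.adj_symm h)
    have e1 : G.adjMatrix ℝ x0 x0 = 0 := by simp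
    have e2 : G.adjMatrix ℝ x2 x2 = 0 := by simp
    have e3 : G.adjMatrix ℝ x0 x2 = 0 := by simp [hnadj02]
    have e4 : G.adjMatrix ℝ x2 x0 = 0 := by simp [hnadj20]
    rw [e1, e2, e3, e4]; ring
  have hqf2 : ∑ z, w z * (G.adjMatrix ℝ *ᵥ w) z = ∑ j, hA.eigenvalues j * c j ^ 2 := by
    calc ∑ z, w z * (G.adjMatrix ℝ *ᵥ w) z
        = ∑ z, w z * ∑ j, (hA.eigenvalues j * c j) * hA.eigenvectorBasis j z := by
          refine Finset.sum_congr rfl fun z _ => ?_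
          congr 1
          rw [DRGaux_expand_vec hA (G.adjMatrix ℝ *ᵥ w) z]
          exact Finset.sum_congr rfl fun j _ => by rw [hcoefA j]
      _ = ∑ j, ∑ z, w z * ((hA.eigenvalues j * c j) * hA.eigenvectorBasis j z) := by
          rw [← Finset.sum_comm]
          exact Finset.sum_congr rfl fun z _ => Finset.mul_sum _ _ _
      _ = ∑ j, hA.eigenvalues j * c j ^ 2 := by
          refine Finset.sum_congr rfl fun j _ => ?_
          have hcj : (∑ z, hA.eigenvectorBasis j z * w z) = c j := rfl
          have h5 : ∑ z, w z * ((hA.eigenvalues j * c j) * hA.eigenvectorBasis j z)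
              = (hA.eigenvalues j * c j) * ∑ z, hA.eigenvectorBasis j z * w z := by
            rw [Finset.mul_sum Finset.univ (fun z => hA.eigenvectorBasis j z * w z)
              (hA.eigenvalues j * c j)]
            exact Finset.sum_congr rfl fun z _ => by ring
          rw [h5, hcj]; ring
  have hterm0 : ∀ j ∈ Finset.univ, hA.eigenvalues j * c j ^ 2 = 0 := by
    rw [← Finset.sum_eq_zero_iff_of_nonpos]
    · rw [← hqf2]; exact hqf
    · intro j _
      rcases hall j with h | h
      · have hcj : c j = 0 := by
          have hconst := DRGaux_perron hconn hreg (v := ⇑(hA.eigenvectorBasis j))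
            (by rw [hA.mulVec_eigenvectorBasis, h]) x0 x2
          show (∑ z, hA.eigenvectorBasis j z * w z) = 0
          have h7 := hwsum (fun z => hA.eigenvectorBasis j z)
          rw [h7]
          exact sub_eq_zero_of_eq hconst
        rw [hcj]; simp
      · have : c j ^ 2 ≥ 0 := sq_nonneg _
        nlinarith
  have hlamc : ∀ j, hA.eigenvalues j * c j = 0 := by
    intro j
    have h0 := hterm0 j (Finset.mem_univ j)
    have h1 : hA.eigenvalues j * c j * c j = 0 := by
      rw [pow_two] at h0
      linarith [h0, mul_assoc (hA.eigenvalues j) (c j) (c j)]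
    rcases mul_eq_zero.1 h1 with h | h
    · exact h
    · rw [h, mul_zero]
  have hAw0 : ∀ z, (G.adjMatrix ℝ *ᵥ w) z = 0 := by
    intro z
    rw [DRGaux_expand_vec hA (G.adjMatrix ℝ *ᵥ w) z]
    refine Finset.sum_eq_zero fun j _ => ?_
    rw [hcoefA j, hlamc j, zero_mul]
  have hnadj30 : ¬ G.Adj x3 x0 := by
    intro h
    have h1 := SimpleGraph.dist_eq_one_iff_adj.2 (G.adj_symm h)
    rw [h03] at h1; omega
  have hfin : (G.adjMatrix ℝ *ᵥ w) x3 = -1 := by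
    rw [hAw x3]
    have e1 : G.adjMatrix ℝ x3 x0 = 0 := by simp [hnadj30]
    have e2 : G.adjMatrix ℝ x3 x2 = 1 := by simp [G.adj_symm h23]
    rw [e1, e2]; ring
  rw [hAw0 x3] at hfin
  norm_num at hfin

end AuxLemmas
open scoped Classical

/-- A distance-regular graph: a connected graph together with its diameter and
intersection numbers `b i`, `c i`. -/
structure DRG (V : Type) [Fintype V] [DecidableEq V] where
  G : SimpleGraph V
  diam : ℕ
  b : ℕ → ℕ
  c : ℕ → ℕ
  conn : G.Connected
  dist_le : ∀ x y : V, G.dist x y ≤ diam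
  dist_attained : ∃ x y : V, G.dist x y = diam
  c_one : c 1 = 1
  count_b : ∀ (i : ℕ) (x y : V), G.dist x y = i →
    Nat.card {z : V // G.Adj y z ∧ G.dist x z = i + 1} = b i
  count_c : ∀ (i : ℕ) (x y : V), 1 ≤ i → G.dist x y = i →
    Nat.card {z : V // G.Adj y z ∧ G.dist x z = i - 1} = c i

namespace DRG

variable {V : Type} [Fintype V] [DecidableEq V]

/-- The adjacency matrix of the graph, over `ℝ`. -/
noncomputable def adjMat (Γ : DRG V) : Matrix V V ℝ := SimpleGraph.adjMatrix ℝ Γ.G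

/-- `θ` is an eigenvalue of the adjacency matrix of `Γ`. -/
def IsEig (Γ : DRG V) (θ : ℝ) : Prop :=
  ∃ v : V → ℝ, v ≠ 0 ∧ Γ.adjMat.mulVec v = θ • v

/-- The valency `k = b 0`. -/
def k (Γ : DRG V) : ℕ := Γ.b 0

/-- The intersection number `a 1 = k - b 1 - c 1` (as an integer). -/
def a1 (Γ : DRG V) : ℤ := (Γ.k : ℤ) - Γ.b 1 - 1

/-- `Γ` is geometric: there is a collection of Delsarte cliques such that every
edge lies in a unique member. -/
def IsGeometric (Γ : DRG V) : Prop :=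
  ∃ θmin : ℝ, Γ.IsEig θmin ∧ (∀ θ : ℝ, Γ.IsEig θ → θmin ≤ θ) ∧
    ∃ 𝒞 : Set (Finset V),
      (∀ C ∈ 𝒞, Γ.G.IsClique (C : Set V) ∧ (C.card : ℝ) = 1 + (Γ.k : ℝ) / |θmin|) ∧
      ∀ x y : V, Γ.G.Adj x y → ∃! C, C ∈ 𝒞 ∧ x ∈ C ∧ y ∈ C

end DRG

set_option maxHeartbeats 1600000 in
theorem a1_bound_from_multiplicities {V : Type} [Fintype V] [DecidableEq V]
    (Γ : DRG V) (hD : 3 ≤ Γ.diam)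
    (θ1 θD : ℝ)
    (hEig1 : Γ.IsEig θ1) (hlt1 : θ1 < (Γ.k : ℝ))
    (hmax1 : ∀ θ : ℝ, Γ.IsEig θ → θ < (Γ.k : ℝ) → θ ≤ θ1)
    (hEigD : Γ.IsEig θD) (hminD : ∀ θ : ℝ, Γ.IsEig θ → θD ≤ θ)
    (hθD : θD ≤ -2)
    (m1 mD : ℕ)
    (hm1 : m1 = Module.finrank ℝ
      (Module.End.eigenspace (Matrix.toLin' Γ.adjMat) θ1))
    (hmD : mD = Module.finrank ℝ
      (Module.End.eigenspace (Matrix.toLin' Γ.adjMat) θD))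
    (N : ℝ) (hN0 : 0 < N) (hN4 : N ≤ 4)
    (hNk : (Γ.k : ℝ) / N ≤ min (m1 : ℝ) (mD : ℝ)) :
    (Γ.a1 : ℝ) + 1 ≤
      N * (((Fintype.card V : ℝ) - 1) / (Γ.k : ℝ) - 1) * ((Γ.k : ℝ) / ((Γ.a1 : ℝ) + 1)) /
        (θ1 / ((Γ.a1 : ℝ) + 1)) ^ 2 := by
  have hconn := Γ.conn
  have hAmat : Γ.adjMat = Γ.G.adjMatrix ℝ := rfl
  have hA : (Γ.G.adjMatrix ℝ).IsHermitian := DRGaux_adj_isHermitian Γ.G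
  -- regularity
  have hdeg : ∀ x, Γ.G.degree x = Γ.k := by
    intro x
    have h := Γ.count_b 0 x x (SimpleGraph.dist_self)
    have he : Nat.card {z // Γ.G.Adj x z ∧ Γ.G.dist x z = 0 + 1}
        = Nat.card {z // Γ.G.Adj x z} :=
      Nat.card_congr (Equiv.subtypeEquivRight (fun z => by
        constructor
        · exact fun hz => hz.1
        · exact fun hz => ⟨hz, by rw [zero_add]; exact SimpleGraph.dist_eq_one_iff_adj.2 hz⟩))
    rw [he] at h
    have hn : Nat.card {z // Γ.G.Adj x z} = Γ.G.degree x := by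
      have : Nat.card {z // Γ.G.Adj x z} = Nat.card (Γ.G.neighborSet x) :=
        Nat.card_congr (Equiv.subtypeEquivRight fun z => (Γ.G.mem_neighborSet x z).symm)
      rw [this, Nat.card_eq_fintype_card, Γ.G.card_neighborSet_eq_degree]
    rw [hn] at h
    exact h
  have hreg : Γ.G.IsRegularOfDegree Γ.k := fun x => hdeg x
  -- geodesic configuration
  obtain ⟨x0, yy, hxy⟩ := Γ.dist_attained
  obtain ⟨p, hp⟩ := hconn.exists_walk_length_eq_dist x0 yy
  have hL : 3 ≤ p.length := by rw [hp, hxy]; exact hD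
  have h01 : Γ.G.Adj x0 (p.getVert 1) := by
    have := p.adj_getVert_succ (by omega : 0 < p.length)
    rwa [p.getVert_zero] at this
  have h12 : Γ.G.Adj (p.getVert 1) (p.getVert 2) :=
    p.adj_getVert_succ (by omega : 1 < p.length)
  have h23 : Γ.G.Adj (p.getVert 2) (p.getVert 3) :=
    p.adj_getVert_succ (by omega : 2 < p.length)
  have hd1 : Γ.G.dist x0 (p.getVert 1) = 1 := SimpleGraph.dist_eq_one_iff_adj.2 h01
  have hd2 : Γ.G.dist x0 (p.getVert 2) = 2 :=
    DRGaux_dist_getVert hconn p hp (i := 2) (by omega)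
  have hd3 : Γ.G.dist x0 (p.getVert 3) = 3 :=
    DRGaux_dist_getVert hconn p hp (i := 3) (by omega)
  set x1 : V := p.getVert 1 with hx1def
  set x2 : V := p.getVert 2 with hx2def
  set x3 : V := p.getVert 3 with hx3def
  clear_value x1 x2 x3
  -- k ≥ 1
  have hk1 : 1 ≤ Γ.k := by
    have h := hdeg x0
    have : 0 < Γ.G.degree x0 := by
      rw [Γ.G.degree_pos_iff_exists_adj x0]
      exact ⟨x1, h01⟩
    omega
  have hkpos : (0:ℝ) < Γ.k := by exact_mod_cast hk1
  -- basis eigenvector facts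
  have bne0 : ∀ j, (⇑(hA.eigenvectorBasis j) : V → ℝ) ≠ 0 := by
    intro j h
    apply hA.eigenvectorBasis.orthonormal.ne_zero j
    ext z
    exact congrFun h z
  have hEig_lam : ∀ j, Γ.IsEig (hA.eigenvalues j) := fun j =>
    ⟨⇑(hA.eigenvectorBasis j), bne0 j, hA.mulVec_eigenvectorBasis j⟩
  have habs : ∀ j, |hA.eigenvalues j| ≤ Γ.k := fun j =>
    DRGaux_eig_le_valency hreg (bne0 j) (hA.mulVec_eigenvectorBasis j)
  have hx02 : x0 ≠ x2 := by intro h; rw [h, SimpleGraph.dist_self] at hd2; omega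
  have hnadj02 : ¬ Γ.G.Adj x0 x2 := by
    intro h
    have h1 := SimpleGraph.dist_eq_one_iff_adj.2 h
    rw [hd2] at h1; omega
  -- θ1 ≠ θD
  have hne : θ1 ≠ θD := by
    intro he
    have hall : ∀ j, hA.eigenvalues j = (Γ.k : ℝ) ∨ hA.eigenvalues j = θ1 := by
      intro j
      by_cases h : hA.eigenvalues j = (Γ.k : ℝ)
      · exact Or.inl h
      · right
        have hlt : hA.eigenvalues j < Γ.k :=
          lt_of_le_of_ne (le_trans (le_abs_self _) (habs j)) h
        have h1 : hA.eigenvalues j ≤ θ1 := hmax1 _ (hEig_lam j) hlt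
        have h2 : θD ≤ hA.eigenvalues j := hminD _ (hEig_lam j)
        rw [← he] at h2
        linarith
    have hkill := DRGaux_kill_two hA hall
    have hez : ((Γ.G.adjMatrix ℝ - (Γ.k:ℝ) • 1) * (Γ.G.adjMatrix ℝ - θ1 • 1)) x0 x2 = 0 := by
      rw [hkill]; rfl
    rw [Matrix.mul_apply] at hez
    have hx01 : x0 ≠ x1 := by intro h; rw [h, SimpleGraph.dist_self] at hd1; omega
    have hx12 : x1 ≠ x2 := by intro h; rw [h] at hd1; rw [hd1] at hd2; omega
    have hterm : ∀ z, 0 ≤ (Γ.G.adjMatrix ℝ - (Γ.k:ℝ) • 1) x0 z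
        * (Γ.G.adjMatrix ℝ - θ1 • 1) z x2 := by
      intro z
      simp only [Matrix.sub_apply, Matrix.smul_apply, Matrix.one_apply, smul_eq_mul]
      by_cases hz0 : x0 = z
      · have e3 : Γ.G.adjMatrix ℝ z x2 = 0 := by rw [← hz0]; simp [hnadj02]
        rw [if_pos hz0, if_neg (by rw [← hz0]; exact hx02), e3]
        simp
      · rw [if_neg hz0, mul_zero, sub_zero]
        by_cases hz2 : z = x2
        · have e4 : Γ.G.adjMatrix ℝ x0 z = 0 := by rw [hz2]; simp [hnadj02]
          rw [e4, zero_mul]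
        · rw [if_neg hz2, mul_zero, sub_zero]
          apply mul_nonneg <;>
            · simp only [SimpleGraph.adjMatrix_apply]
              split <;> norm_num
    have hone : (1:ℝ) ≤ (Γ.G.adjMatrix ℝ - (Γ.k:ℝ) • 1) x0 x1
        * (Γ.G.adjMatrix ℝ - θ1 • 1) x1 x2 := by
      simp only [Matrix.sub_apply, Matrix.smul_apply, Matrix.one_apply, smul_eq_mul]
      rw [if_neg hx01, if_neg hx12]
      have e1 : Γ.G.adjMatrix ℝ x0 x1 = 1 := by simp [h01]
      have e2 : Γ.G.adjMatrix ℝ x1 x2 = 1 := by simp [h12]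
      rw [e1, e2]
      norm_num
    have hsum : (1:ℝ) ≤ ∑ z, (Γ.G.adjMatrix ℝ - (Γ.k:ℝ) • 1) x0 z
        * (Γ.G.adjMatrix ℝ - θ1 • 1) z x2 := by
      calc (1:ℝ) ≤ (Γ.G.adjMatrix ℝ - (Γ.k:ℝ) • 1) x0 x1
          * (Γ.G.adjMatrix ℝ - θ1 • 1) x1 x2 := hone
        _ ≤ _ := Finset.single_le_sum (fun z _ => hterm z) (Finset.mem_univ x1)
    rw [hez] at hsum
    norm_num at hsum
  have hθDlt : θD < θ1 := lt_of_le_of_ne (hminD θ1 hEig1) (Ne.symm hne)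
  -- θ1 > 0
  have hθ1pos : 0 < θ1 := by
    by_contra hcon
    push_neg at hcon
    have hall : ∀ j, hA.eigenvalues j = (Γ.k : ℝ) ∨ hA.eigenvalues j ≤ 0 := by
      intro j
      by_cases h : hA.eigenvalues j = (Γ.k : ℝ)
      · exact Or.inl h
      · right
        have hlt : hA.eigenvalues j < Γ.k :=
          lt_of_le_of_ne (le_trans (le_abs_self _) (habs j)) h
        exact le_trans (hmax1 _ (hEig_lam j) hlt) hcon
    exact DRGaux_quadform_contra hconn hreg hA hd2 hd3 h23 hall
  -- k is an eigenvalue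
  have hkEig : ∃ j, hA.eigenvalues j = (Γ.k : ℝ) := by
    have : Nonempty V := ⟨x0⟩
    refine DRGaux_exists_eig_index hA (v := Function.const V (1:ℝ)) ?_ ?_
    · intro h
      have := congrFun h x0
      norm_num [Function.const] at this
    · funext z
      rw [SimpleGraph.adjMatrix_mulVec_const_apply_of_regular hreg]
      simp [Function.const]
  -- trace identity
  have htr : ∑ j, hA.eigenvalues j ^ 2 = (Fintype.card V : ℝ) * Γ.k := by
    rw [DRGaux_sum_sq_eig hA, DRGaux_trace_sq Γ.G]
    rw [Finset.sum_congr rfl (fun x _ => by rw [hdeg x])]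
    rw [Finset.sum_const, Finset.card_univ, nsmul_eq_mul]
  -- multiplicity bounds
  have hm1le : (m1 : ℝ) ≤ (Finset.univ.filter fun j => hA.eigenvalues j = θ1).card := by
    have h := DRGaux_finrank_eigenspace_le (A := Γ.G.adjMatrix ℝ) hA θ1
    rw [Fintype.card_subtype] at h
    rw [hm1]
    exact_mod_cast h
  have hmDle : (mD : ℝ) ≤ (Finset.univ.filter fun j => hA.eigenvalues j = θD).card := by
    have h := DRGaux_finrank_eigenspace_le (A := Γ.G.adjMatrix ℝ) hA θD
    rw [Fintype.card_subtype] at h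
    rw [hmD]
    exact_mod_cast h
  -- main spectral inequality
  have key : θ1 ^ 2 ≤ N * ((Fintype.card V : ℝ) - 1 - Γ.k) := by
    set lam := hA.eigenvalues with hlam
    set F0 := Finset.univ.filter (fun j => lam j = (Γ.k:ℝ)) with hF0
    set F1 := Finset.univ.filter (fun j => lam j = θ1) with hF1
    set FD := Finset.univ.filter (fun j => lam j = θD) with hFD
    have hkne1 : (Γ.k:ℝ) ≠ θ1 := by linarith
    have hkneD : (Γ.k:ℝ) ≠ θD := by linarith
    have hd01 : Disjoint F0 F1 := Finset.disjoint_left.2 (fun j h0 h1 =>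
      absurd (((Finset.mem_filter.1 h0).2).symm.trans ((Finset.mem_filter.1 h1).2)) hkne1)
    have hd0D : Disjoint F0 FD := Finset.disjoint_left.2 (fun j h0 h1 =>
      absurd (((Finset.mem_filter.1 h0).2).symm.trans ((Finset.mem_filter.1 h1).2)) hkneD)
    have hd1D : Disjoint F1 FD := Finset.disjoint_left.2 (fun j h0 h1 =>
      absurd (((Finset.mem_filter.1 h0).2).symm.trans ((Finset.mem_filter.1 h1).2)) hne)
    have hd01D : Disjoint (F0 ∪ F1) FD := Finset.disjoint_union_left.2 ⟨hd0D, hd1D⟩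
    have hs : ∑ j ∈ (F0 ∪ F1 ∪ FD), lam j ^ 2 ≤ ∑ j, lam j ^ 2 :=
      Finset.sum_le_sum_of_subset_of_nonneg (Finset.subset_univ _) (fun j _ _ => sq_nonneg _)
    have hsplit : ∑ j ∈ (F0 ∪ F1 ∪ FD), lam j ^ 2
        = ∑ j ∈ F0, lam j ^ 2 + ∑ j ∈ F1, lam j ^ 2 + ∑ j ∈ FD, lam j ^ 2 := by
      rw [Finset.sum_union hd01D, Finset.sum_union hd01]
    have h0sum : ∑ j ∈ F0, lam j ^ 2 = (F0.card : ℝ) * (Γ.k : ℝ) ^ 2 := by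
      rw [Finset.sum_congr rfl (fun j hj => by rw [(Finset.mem_filter.1 hj).2])]
      rw [Finset.sum_const, nsmul_eq_mul]
    have h1sum : ∑ j ∈ F1, lam j ^ 2 = (F1.card : ℝ) * θ1 ^ 2 := by
      rw [Finset.sum_congr rfl (fun j hj => by rw [(Finset.mem_filter.1 hj).2])]
      rw [Finset.sum_const, nsmul_eq_mul]
    have hDsum : ∑ j ∈ FD, lam j ^ 2 = (FD.card : ℝ) * θD ^ 2 := by
      rw [Finset.sum_congr rfl (fun j hj => by rw [(Finset.mem_filter.1 hj).2])]
      rw [Finset.sum_const, nsmul_eq_mul]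
    have hF0card : (1:ℝ) ≤ F0.card := by
      obtain ⟨j, hj⟩ := hkEig
      have : j ∈ F0 := Finset.mem_filter.2 ⟨Finset.mem_univ j, hj⟩
      have := Finset.card_pos.2 ⟨j, this⟩
      exact_mod_cast this
    have hkN : (Γ.k : ℝ) / N ≤ (m1 : ℝ) := le_trans hNk (min_le_left _ _)
    have hkND : (Γ.k : ℝ) / N ≤ (mD : ℝ) := le_trans hNk (min_le_right _ _)
    have hθDsq : (4:ℝ) ≤ θD ^ 2 := by nlinarith
    have hbig : (Γ.k:ℝ)^2 + (Γ.k/N) * θ1^2 + (Γ.k/N) * 4 ≤ (Fintype.card V : ℝ) * Γ.k := by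
      have e1 : (Γ.k:ℝ)^2 ≤ (F0.card : ℝ) * (Γ.k:ℝ)^2 := by nlinarith [sq_nonneg ((Γ.k:ℝ))]
      have e2 : (Γ.k/N) * θ1^2 ≤ (F1.card : ℝ) * θ1^2 := by
        have := le_trans hkN hm1le
        nlinarith [sq_nonneg θ1]
      have e3 : (Γ.k/N) * 4 ≤ (FD.card : ℝ) * θD^2 := by
        have h9 := le_trans hkND hmDle
        have h10 : (0:ℝ) ≤ Γ.k / N := le_of_lt (div_pos hkpos hN0)
        nlinarith
      calc (Γ.k:ℝ)^2 + (Γ.k/N) * θ1^2 + (Γ.k/N) * 4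
          ≤ (F0.card : ℝ) * (Γ.k:ℝ)^2 + (F1.card : ℝ) * θ1^2 + (FD.card : ℝ) * θD^2 := by
            linarith
        _ = ∑ j ∈ (F0 ∪ F1 ∪ FD), lam j ^ 2 := by rw [hsplit, h0sum, h1sum, hDsum]
        _ ≤ ∑ j, lam j ^ 2 := hs
        _ = (Fintype.card V : ℝ) * Γ.k := htr
    have hmul := mul_le_mul_of_nonneg_left hbig (le_of_lt (div_pos hN0 hkpos))
    have heq1 : (N/(Γ.k:ℝ)) * ((Γ.k:ℝ)^2 + (Γ.k/N)*θ1^2 + (Γ.k/N)*4)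
        = N*(Γ.k:ℝ) + θ1^2 + 4 := by
      field_simp
    have heq2 : (N/(Γ.k:ℝ)) * ((Fintype.card V:ℝ) * Γ.k) = N * (Fintype.card V:ℝ) := by
      field_simp
    rw [heq1, heq2] at hmul
    nlinarith
  -- b 1 + 1 ≤ k
  have hb1 : Γ.b 1 + 1 ≤ Γ.k := by
    have h := Γ.count_b 1 x0 x1 hd1
    have hsub : {z : V | Γ.G.Adj x1 z ∧ Γ.G.dist x0 z = 1 + 1}
        ⊆ (Γ.G.neighborSet x1) \ {x0} := by
      intro z hz
      refine ⟨hz.1, ?_⟩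
      intro h0
      rw [Set.mem_singleton_iff] at h0
      have h2 := hz.2
      rw [h0, SimpleGraph.dist_self] at h2
      omega
    have hc1 : Nat.card {z // Γ.G.Adj x1 z ∧ Γ.G.dist x0 z = 1+1}
        = ({z : V | Γ.G.Adj x1 z ∧ Γ.G.dist x0 z = 1 + 1} : Set V).ncard := by
      rw [← Nat.card_coe_set_eq]
      exact Nat.card_congr (Equiv.subtypeEquivRight fun z => Iff.rfl)
    have hle : ({z : V | Γ.G.Adj x1 z ∧ Γ.G.dist x0 z = 1 + 1} : Set V).ncard
        ≤ ((Γ.G.neighborSet x1) \ {x0}).ncard :=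
      Set.ncard_le_ncard hsub (Set.toFinite _)
    have hmem : x0 ∈ Γ.G.neighborSet x1 := (Γ.G.mem_neighborSet x1 x0).2 h01.symm
    have hdiff : ((Γ.G.neighborSet x1) \ {x0}).ncard = (Γ.G.neighborSet x1).ncard - 1 :=
      Set.ncard_diff_singleton_of_mem hmem
    have hnb : (Γ.G.neighborSet x1).ncard = Γ.k := by
      rw [← Nat.card_coe_set_eq, Nat.card_eq_fintype_card,
        Γ.G.card_neighborSet_eq_degree, hdeg]
    rw [hc1] at h
    omega
  -- final algebra
  have hαeq : (Γ.a1 : ℝ) + 1 = (Γ.k : ℝ) - Γ.b 1 := by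
    rw [DRG.a1]
    push_cast
    ring
  have hb1' : (Γ.b 1 : ℝ) + 1 ≤ (Γ.k : ℝ) := by exact_mod_cast hb1
  have hα1 : (1:ℝ) ≤ (Γ.a1 : ℝ) + 1 := by rw [hαeq]; linarith
  have hαpos : (0:ℝ) < (Γ.a1 : ℝ) + 1 := lt_of_lt_of_le one_pos hα1
  have hθ1ne : θ1 ≠ 0 := ne_of_gt hθ1pos
  have hαne : ((Γ.a1 : ℝ) + 1) ≠ 0 := ne_of_gt hαpos
  have hkne : (Γ.k : ℝ) ≠ 0 := ne_of_gt hkpos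
  have hRHS : N * (((Fintype.card V : ℝ) - 1) / (Γ.k : ℝ) - 1) * ((Γ.k : ℝ) / ((Γ.a1 : ℝ) + 1)) /
        (θ1 / ((Γ.a1 : ℝ) + 1)) ^ 2
      = N * ((Fintype.card V : ℝ) - 1 - Γ.k) * ((Γ.a1 : ℝ) + 1) / θ1 ^ 2 := by
    field_simp
  rw [hRHS, le_div_iff₀ (by positivity)]
  nlinarith [mul_le_mul_of_nonneg_left key (le_of_lt hαpos)]
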